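/- arXiv:2006.03667 — 9 statements merged into one kernel-verified Lean document; each statement's English description precedes it below -/
import Mathlib

section
/- Every totally path-disconnected topological space is T1. -/
/-!
If `x ⤳ y`, the map from Sierpiński space `Prop` sending `True ↦ x`, `False ↦ y` is continuous,
and composing it with `t ↦ t ≠ 0` gives a path in `Z` from `y` to `x`; in a totally
path-disconnected space this path is constant, so `x = y`.
-/

open unitInterval Topology

/-- The space of paths in `X` starting at `x`, as a subspace of `C(I, X)`
with the compact-open topology. -/
abbrev PS (X : Type*) [TopologicalSpace X] (x : X) : Type _ := {f : C(I, X) // f 0 = x}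

/-- The map on based path spaces induced by `p`. -/
def indMap {E X : Type*} [TopologicalSpace E] [TopologicalSpace X] (p : C(E, X)) (e : E) :
    PS E e → PS X (p e) :=
  fun α => ⟨p.comp α.1, by simp [α.2]⟩

/-- `p` has the unique path-lifting property. -/
def UniquePathLifting {E X : Type*} [TopologicalSpace E] [TopologicalSpace X]
    (p : C(E, X)) : Prop :=
  ∀ e : E, Function.Injective (indMap p e)

/-- `p` has the path-covering property. -/
def PathCovering {E X : Type*} [TopologicalSpace E] [TopologicalSpace X]
    (p : C(E, X)) : Prop :=
  ∀ e : E, Function.Bijective (indMap p e)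

/-- `p` has the continuous path-covering property. -/
def ContPathCovering {E X : Type*} [TopologicalSpace E] [TopologicalSpace X]
    (p : C(E, X)) : Prop :=
  ∀ e : E, IsHomeomorph (indMap p e)

/-- A space is totally path-disconnected if every path in it is constant. -/
def TotallyPathDisconnected (Z : Type*) [TopologicalSpace Z] : Prop :=
  ∀ γ : C(I, Z), ∀ s t : I, γ s = γ t

/-- `p` has the homotopy lifting property with respect to `Z`. -/
def HLP {E X : Type*} [TopologicalSpace E] [TopologicalSpace X] (p : C(E, X))
    (Z : Type*) [TopologicalSpace Z] : Prop :=
  ∀ (f : C(Z, E)) (g : C(Z × I, X)), (∀ z, g (z, 0) = p (f z)) →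
    ∃ G : C(Z × I, E), (∀ w, p (G w) = g w) ∧ ∀ z, G (z, 0) = f z

open Filter

open Classical in
theorem Specializes.continuous_ite_Prop {X : Type*} [TopologicalSpace X] {x y : X} (h : x ⤳ y) :
    Continuous fun p : Prop => if p then x else y := by
  refine continuous_iff_continuousAt.2 fun p => ?_
  by_cases hp : p
  · rw [ContinuousAt, eq_true hp, nhds_true]
    exact tendsto_pure_nhds _ _
  · rw [ContinuousAt, eq_false hp, nhds_false, if_neg not_false]
    intro U hU
    simp only [mem_map, mem_top, Set.eq_univ_iff_forall, Set.mem_preimage]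
    intro q
    split_ifs
    · exact mem_of_mem_nhds (h hU)
    · exact mem_of_mem_nhds hU

/-- Every totally path-disconnected space is T1. -/
theorem stmt1 {Z : Type*} [TopologicalSpace Z] (h : TotallyPathDisconnected Z) :
    T1Space Z := by
  refine t1Space_iff_specializes_imp_eq.2 fun x y hxy => ?_
  have hγ := hxy.continuous_ite_Prop.comp <|
    continuous_Prop.2 (isOpen_compl_singleton (x := (0 : I)))
  simpa using h ⟨_, hγ⟩ 1 0
end

section
/- If p : E → X has the unique path-lifting property and X is T1, then E is T1. -/
open unitInterval Topology

theorem TotallyPathDisconnected.t1Space {Z : Type*} [TopologicalSpace Z]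
    (hZ : TotallyPathDisconnected Z) : T1Space Z := by
  rw [t1Space_iff_specializes_imp_eq]
  intro x y hxy
  obtain ⟨γ, -⟩ := hxy.joinedIn (Set.mem_univ x) (Set.mem_univ y)
  simpa using hZ γ 0 1

theorem UniquePathLifting.totallyPathDisconnected_fiber {E X : Type*} [TopologicalSpace E]
    [TopologicalSpace X] {p : C(E, X)} (h : UniquePathLifting p) (b : X) :
    TotallyPathDisconnected (p ⁻¹' {b}) := by
  suffices ∀ γ : C(I, p ⁻¹' {b}), ∀ s, γ s = γ 0 from fun γ s t => (this γ s).trans (this γ t).symm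
  intro γ s
  let lift : PS E (γ 0) := ⟨ContinuousMap.comp ⟨Subtype.val, continuous_subtype_val⟩ γ, rfl⟩
  let const : PS E (γ 0) := ⟨ContinuousMap.const I (γ 0), rfl⟩
  have hproj : indMap p _ lift = indMap p _ const := by
    ext t
    simp only [indMap, ContinuousMap.comp_apply, ContinuousMap.coe_mk, ContinuousMap.const_apply,
      lift, const]
    rw [(γ t).2, (γ 0).2]
  exact Subtype.ext (congrArg (fun α : PS E (γ 0) => α.1 s) (h _ hproj))

theorem t1Space_of_t1Space_fibers {E X : Type*} [TopologicalSpace E] [TopologicalSpace X]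
    [T1Space X] {f : E → X} (hf : Continuous f) (hfib : ∀ b, T1Space (f ⁻¹' {b})) :
    T1Space E := by
  rw [t1Space_iff_specializes_imp_eq]
  intro x y hxy
  have hy : y ∈ f ⁻¹' {f x} := (hxy.map hf).eq.symm
  have hsub : (⟨x, rfl⟩ : f ⁻¹' {f x}) ⤳ ⟨y, hy⟩ :=
    Topology.IsInducing.subtypeVal.specializes_iff.mp hxy
  exact congrArg Subtype.val hsub.eq

/-- If `p : E → X` has the unique path-lifting property and `X` is T1, then `E` is T1. -/
theorem stmt2 {E X : Type*} [TopologicalSpace E] [TopologicalSpace X] (p : C(E, X))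
    (h : UniquePathLifting p) [T1Space X] : T1Space E :=
  t1Space_of_t1Space_fibers p.continuous fun b => (h.totallyPathDisconnected_fiber b).t1Space
end

section
/- If f : X → Y and g : Y → Z are maps of nonempty path-connected spaces such that g and g∘f both have the path-covering property, then f has the path-covering property. -/
open unitInterval Topology

theorem indMap_comp {X Y Z : Type*} [TopologicalSpace X] [TopologicalSpace Y]
    [TopologicalSpace Z] (g : C(Y, Z)) (f : C(X, Y)) (x : X) :
    indMap (g.comp f) x = indMap g (f x) ∘ indMap f x :=
  rfl

theorem PathCovering.uniquePathLifting {E X : Type*} [TopologicalSpace E] [TopologicalSpace X]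
    {p : C(E, X)} (hp : PathCovering p) : UniquePathLifting p :=
  fun e => (hp e).injective

theorem PathCovering.of_comp {X Y Z : Type*} [TopologicalSpace X] [TopologicalSpace Y]
    [TopologicalSpace Z] {f : C(X, Y)} {g : C(Y, Z)} (hg : UniquePathLifting g)
    (hgf : PathCovering (g.comp f)) : PathCovering f := fun x =>
  Function.Bijective.of_comp_left (indMap_comp g f x ▸ hgf x) (hg (f x))

theorem stmt4_general {X Y Z : Type*} [TopologicalSpace X] [TopologicalSpace Y] [TopologicalSpace Z]
    (f : C(X, Y)) (g : C(Y, Z)) (hg : PathCovering g) (hgf : PathCovering (g.comp f)) :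
    PathCovering f :=
  hgf.of_comp hg.uniquePathLifting

/-- If `g` and `g ∘ f` have the path-covering property, then so does `f`. -/
theorem stmt4 {X Y Z : Type*} [TopologicalSpace X] [TopologicalSpace Y] [TopologicalSpace Z]
    [PathConnectedSpace X] [PathConnectedSpace Y] [PathConnectedSpace Z]
    (f : C(X, Y)) (g : C(Y, Z)) (hg : PathCovering g) (hgf : PathCovering (g.comp f)) :
    PathCovering f :=
  stmt4_general f g hg hgf
end

section
/- A Hurewicz fibration with totally path-disconnected fibers has the continuous path-covering property; in particular, given a net of paths α_j in X starting at p(e) converging to α in the compact-open topology, the unique lifts starting at e converge to the lift of α. -/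
/-!
Lifting the evaluation homotopy `(γ, t) ↦ γ t` on the based path space gives a continuous
section of `indMap p e`, which is a two-sided inverse as soon as lifts are unique. For uniqueness:
if `a` and `b` lift `γ` from the same point, the reverse of `a` followed by `b` lies over the
null-homotopic loop `γ⁻¹ γ`. Lifting a null-homotopy of that loop, the other three sides of the
square lie in single fibers, hence are constant, so `a 1 = b 1`.
-/

open unitInterval Topology

namespace HLP

variable {E X : Type*} [TopologicalSpace E] [TopologicalSpace X] {p : C(E, X)}

theorem of_homeomorph {Z W : Type*} [TopologicalSpace Z] [TopologicalSpace W]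
    (h : Z ≃ₜ W) (H : HLP p Z) : HLP p W := by
  intro f g hg
  obtain ⟨G, hG_lift, hG_init⟩ := H (f.comp h) (g.comp (h.prodCongr (Homeomorph.refl I)))
    fun z => by simpa using hg (h z)
  refine ⟨G.comp (h.symm.prodCongr (Homeomorph.refl I)), fun w => ?_, fun w => ?_⟩
  · simpa [Prod.map] using hG_lift (h.symm w.1, w.2)
  · simpa using hG_init (h.symm w)

theorem of_ulift {Z : Type*} [TopologicalSpace Z] (H : HLP p (ULift Z)) : HLP p Z :=
  H.of_homeomorph Homeomorph.ulift

end HLP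

section PathLifting

variable {E X : Type*} [TopologicalSpace E] [TopologicalSpace X] {p : C(E, X)}

theorem TotallyPathDisconnected.apply_eq_of_forall_apply_mem_fiber
    (hfibers : ∀ x : X, TotallyPathDisconnected {e : E // p e = x})
    {x : X} (c : C(I, E)) (hc : ∀ s, p (c s) = x) (s t : I) : c s = c t :=
  congrArg Subtype.val (hfibers x ⟨fun s => ⟨c s, hc s⟩, by fun_prop⟩ s t)

theorem HLP.lift_apply_zero_eq_one_of_homotopic_refl (hlp : HLP p I)
    (hfibers : ∀ x : X, TotallyPathDisconnected {e : E // p e = x})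
    {x : X} {γ : Path x x} (hγ : γ.Homotopic (Path.refl x))
    (f : C(I, E)) (hf : ∀ t, p (f t) = γ t) : f 0 = f 1 := by
  obtain ⟨F⟩ := hγ
  obtain ⟨G, hG_lift, hG_init⟩ :=
    hlp f (F.toContinuousMap.comp ContinuousMap.prodSwap) fun t =>
      (F.apply_zero t).trans (hf t).symm
  have const_of_over_x (c : C(I, I × I)) (hc : ∀ s, F (c s).swap = x) (s t : I) :
      G (c s) = G (c t) :=
    TotallyPathDisconnected.apply_eq_of_forall_apply_mem_fiber hfibers (G.comp c)
      (fun s => (hG_lift _).trans (hc s)) s t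
  calc f 0 = G (0, 0) := (hG_init 0).symm
    _ = G (0, 1) := const_of_over_x ⟨fun u => (0, u), by fun_prop⟩ (fun u => F.source u) 0 1
    _ = G (1, 1) := const_of_over_x ⟨fun s => (s, 1), by fun_prop⟩ (fun s => F.apply_one s) 0 1
    _ = G (1, 0) := const_of_over_x ⟨fun u => (1, u), by fun_prop⟩ (fun u => F.target u) 1 0
    _ = f 1 := hG_init 1

theorem HLP.lift_apply_one_eq (hlp : HLP p I)
    (hfibers : ∀ x : X, TotallyPathDisconnected {e : E // p e = x})
    (a b : C(I, E)) (hab : ∀ t, p (a t) = p (b t)) (h0 : a 0 = b 0) : a 1 = b 1 := by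
  let A : Path (a 0) (a 1) := ⟨a, rfl, rfl⟩
  let B : Path (a 0) (b 1) := ⟨b, h0.symm, rfl⟩
  let γ := A.map p.continuous
  have hloop : ∀ t, p (A.symm.trans B t) = γ.symm.trans γ t := fun t => by
    rw [Path.trans_apply, Path.trans_apply]
    split_ifs
    · rfl
    · exact (hab _).symm
  simpa using hlp.lift_apply_zero_eq_one_of_homotopic_refl hfibers
    ⟨(Path.Homotopy.reflSymmTrans γ).symm⟩ (A.symm.trans B) hloop

theorem HLP.uniquePathLifting (hlp : HLP p I)
    (hfibers : ∀ x : X, TotallyPathDisconnected {e : E // p e = x}) :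
    UniquePathLifting p := by
  intro e α β hαβ
  have hab (t : I) : p (α.1 t) = p (β.1 t) := DFunLike.congr_fun (congrArg Subtype.val hαβ) t
  refine Subtype.ext (ContinuousMap.ext fun t => ?_)
  let ρ : C(I, I) := ⟨fun s => s * t, by fun_prop⟩
  simpa [ρ] using hlp.lift_apply_one_eq hfibers (α.1.comp ρ) (β.1.comp ρ)
    (fun s => hab (ρ s)) (by simp [ρ, α.2, β.2])

end PathLifting

theorem UniquePathLifting.contPathCovering {E X : Type*} [TopologicalSpace E]
    [TopologicalSpace X] {p : C(E, X)} (hupl : UniquePathLifting p)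
    (hlp : ∀ x : X, HLP p (PS X x)) : ContPathCovering p := by
  intro e
  obtain ⟨G, hG_lift, hG_init⟩ := hlp (p e) (ContinuousMap.const _ e)
    ⟨fun w => w.1.1 w.2, by fun_prop⟩ fun γ => γ.2
  let lift : PS X (p e) → PS E e := fun γ => ⟨G.curry γ, hG_init γ⟩
  have section_eq (γ : PS X (p e)) : indMap p e (lift γ) = γ :=
    Subtype.ext (ContinuousMap.ext fun t => hG_lift (γ, t))
  exact Homeomorph.isHomeomorph
    { toFun := indMap p e
      invFun := lift
      left_inv := fun α => hupl e (section_eq (indMap p e α))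
      right_inv := section_eq
      continuous_toFun :=
        ((ContinuousMap.continuous_postcomp p).comp continuous_subtype_val).subtype_mk _
      continuous_invFun := G.curry.continuous.subtype_mk _ }

/-- A Hurewicz fibration (homotopy lifting property with respect to all spaces)
with totally path-disconnected fibers has the continuous path-covering property. -/
theorem stmt7 {E X : Type*} [TopologicalSpace E] [TopologicalSpace X] (p : C(E, X))
    (hfib : ∀ (Z : Type (max u_1 u_2)) [TopologicalSpace Z], HLP p Z)
    (hfibers : ∀ x : X, TotallyPathDisconnected {e : E // p e = x}) :
    ContPathCovering p :=
  ((hfib (ULift I)).of_ulift.uniquePathLifting hfibers).contPathCovering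
    fun x => (hfib (ULift (PS X x))).of_ulift
end

section
/- If p : E → X has the continuous path-covering property, then p is a Serre fibration. -/
/-!
Contract the cube to a point `z₀`. For each `z`, follow the image under `p` of the path from
`f z₀` to `f z` traced by the contraction, then the path `t ↦ g (z, t)`. All these paths start
at `p (f z₀)`, so continuity of the inverse of `P(p)` at the single base point `f z₀` lifts them
continuously in `z`. By uniqueness of lifts the first half of each lift is the contraction path
in `E`, so the second half is a lift of `g (z, ·)` starting at `f z`.
-/

open unitInterval Topology

instance unitInterval.contractibleSpace : ContractibleSpace I :=
  (convex_Icc (0 : ℝ) 1).contractibleSpace (Set.nonempty_Icc.2 zero_le_one)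

instance ContractibleSpace.pi {ι : Type*} {Y : ι → Type*} [∀ i, TopologicalSpace (Y i)]
    [∀ i, ContractibleSpace (Y i)] : ContractibleSpace (∀ i, Y i) := by
  choose y hy using fun i => id_nullhomotopic (Y i)
  exact (contractible_iff_id_nullhomotopic _).2
    ⟨y, ⟨ContinuousMap.Homotopy.pi fun i =>
      ((hy i).comp (.refl (ContinuousMap.eval i))).some⟩⟩

namespace unitInterval

noncomputable def lowerHalf (s : I) : I :=
  ⟨s / 2, by constructor <;> linarith [s.2.1, s.2.2]⟩

noncomputable def upperHalf (t : I) : I :=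
  ⟨(t + 1) / 2, by constructor <;> linarith [t.2.1, t.2.2]⟩

@[fun_prop]
theorem continuous_lowerHalf : Continuous lowerHalf := by
  unfold lowerHalf; fun_prop

@[fun_prop]
theorem continuous_upperHalf : Continuous upperHalf := by
  unfold upperHalf; fun_prop

@[simp]
theorem lowerHalf_zero : lowerHalf 0 = 0 := by
  ext; simp [lowerHalf]

theorem upperHalf_zero : upperHalf 0 = lowerHalf 1 := by
  ext; simp [upperHalf, lowerHalf]

end unitInterval

namespace Path

variable {Y : Type*} [TopologicalSpace Y] {x y z : Y}

theorem trans_apply_lowerHalf (γ : Path x y) (γ' : Path y z) (s : I) :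
    (γ.trans γ') (lowerHalf s) = γ s := by
  rw [trans_apply, dif_pos (by simp only [lowerHalf]; linarith [s.2.2])]
  congr 1; ext; simp only [lowerHalf]; ring

theorem trans_apply_upperHalf (γ : Path x y) (γ' : Path y z) (t : I) :
    (γ.trans γ') (upperHalf t) = γ' t := by
  rw [trans_apply]
  split_ifs with h
  · have ht : t = 0 :=
      Set.Icc.coe_eq_zero.1 <| le_antisymm (by simp only [upperHalf] at h; linarith) t.2.1
    subst ht
    convert γ.target using 2
    · ext; simp [upperHalf]
    · exact γ'.source
  · congr 1; ext; simp only [upperHalf]; ring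

end Path

section PathLifting

variable {E X : Type*} [TopologicalSpace E] [TopologicalSpace X] {p : C(E, X)}

theorem UniquePathLifting.eq_of_comp_eq (hp : UniquePathLifting p) {γ δ : C(I, E)}
    (h₀ : γ 0 = δ 0) (h : p.comp γ = p.comp δ) : γ = δ :=
  congrArg Subtype.val <| hp (γ 0) (a₁ := ⟨γ, rfl⟩) (a₂ := ⟨δ, h₀.symm⟩) (Subtype.ext h)

namespace ContPathCovering

theorem uniquePathLifting (hp : ContPathCovering p) : UniquePathLifting p :=
  fun e => (hp e).injective

theorem exists_lift_family {Z : Type*} [TopologicalSpace Z] (hp : ContPathCovering p)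
    (e : E) (c : C(Z × I, X)) (hc : ∀ z, c (z, 0) = p e) :
    ∃ C : C(Z × I, E), (∀ w, p (C w) = c w) ∧ ∀ z, C (z, 0) = e := by
  let L := ((hp e).homeomorph (indMap p e)).symm
  let η : C(Z, PS X (p e)) := ⟨fun z => ⟨c.curry z, hc z⟩, by fun_prop⟩
  let C : C(Z, C(I, E)) := ⟨fun z => (L (η z)).1, by fun_prop⟩
  refine ⟨C.uncurry, fun ⟨z, s⟩ => ?_, fun z => (L (η z)).2⟩
  have hlift : indMap p e (L (η z)) = η z := L.symm_apply_apply (η z)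
  exact DFunLike.congr_fun (congrArg Subtype.val hlift) s

theorem hlp_of_contractibleSpace (hp : ContPathCovering p) (Z : Type*) [TopologicalSpace Z]
    [ContractibleSpace Z] : HLP p Z := by
  intro f g hfg
  obtain ⟨z₀, ⟨H⟩⟩ := id_nullhomotopic Z
  let β : ∀ z, Path (f z₀) (f z) := fun z =>
    { toFun := fun s => f (H.symm (s, z))
      source' := by simp
      target' := by simp }
  have hβ : Continuous ↿β := f.continuous.comp (H.symm.continuous.comp continuous_swap)
  let γ : ∀ z, Path (p (f z)) (g (z, 1)) := fun z =>
    { toFun := fun t => g (z, t)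
      source' := hfg z
      target' := rfl }
  have hγ : Continuous ↿γ := g.continuous
  let c : ∀ z, Path (p (f z₀)) (g (z, 1)) := fun z => ((β z).map p.continuous).trans (γ z)
  have hc : Continuous ↿c :=
    Path.trans_continuous_family _ (p.continuous.comp hβ) γ hγ
  obtain ⟨C, hCp, hC₀⟩ := hp.exists_lift_family (f z₀) ⟨↿c, hc⟩ fun z => (c z).source
  replace hCp : ∀ z s, p (C (z, s)) = c z s := fun z s => hCp (z, s)
  have hC_lower : ∀ z s, C (z, lowerHalf s) = β z s := by
    intro z s
    let δ : C(I, E) := C.comp ⟨fun s => (z, lowerHalf s), by fun_prop⟩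
    have hδ : δ = (β z).toContinuousMap :=
      hp.uniquePathLifting.eq_of_comp_eq (by simp [δ, hC₀]) <| by
        ext t; simp [δ, hCp, c, Path.trans_apply_lowerHalf]
    exact DFunLike.congr_fun hδ s
  refine ⟨C.comp ⟨fun w => (w.1, upperHalf w.2), by fun_prop⟩, fun ⟨z, t⟩ => ?_, fun z => ?_⟩
  · exact (hCp z (upperHalf t)).trans (Path.trans_apply_upperHalf _ (γ z) t)
  · simpa [upperHalf_zero] using hC_lower z 1

end ContPathCovering

end PathLifting

theorem stmt8_general {E X : Type*} [TopologicalSpace E] [TopologicalSpace X]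
    (p : C(E, X))
    (hp : ContPathCovering p) :
    ∀ n : ℕ, HLP p (Fin n → I) :=
  fun n => hp.hlp_of_contractibleSpace (Fin n → I)

/-- A map with the continuous path-covering property is a Serre fibration:
it has the homotopy lifting property with respect to all cubes `Iⁿ`. -/
theorem stmt8 {E X : Type*} [TopologicalSpace E] [TopologicalSpace X]
    [PathConnectedSpace E] [PathConnectedSpace X] (p : C(E, X))
    (hp : ContPathCovering p) :
    ∀ n : ℕ, HLP p (Fin n → I) :=
  stmt8_general p hp
end

section
/- If p : E → X has the continuous path-covering property, then for every e ∈ E and n ≥ 1, the induced map (E,e)^(Iⁿ,0) → (X,p(e))^(Iⁿ,0) between relative mapping spaces with the compact-open topology, given by f ↦ p∘f, is a homeomorphism. -/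
open unitInterval Topology

/-!
A based map `g : (Iⁿ, 0) → (X, p e)` is lifted pointwise: the lift sends `y` to the endpoint of
the lift of the path `g` traces along the segment from `0` to `y`. The segment to `0` is constant,
so the lift is based, and it depends continuously on `(g, y)` because path lifting is
continuous. This works verbatim for any locally compact space contracting onto its basepoint
relative to the basepoint.
-/

open ContinuousMap

namespace ContinuousMap.HomotopyRel

variable {Y : Type*} [TopologicalSpace Y] {y₀ : Y}

/-- The track `t ↦ H (t, y)` of a point under a contraction `H` of `Y` onto `y₀`. -/
def track (H : HomotopyRel (const Y y₀) (ContinuousMap.id Y) {y₀}) : C(Y, C(I, Y)) :=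
  (H.toContinuousMap.comp ⟨Prod.swap, continuous_swap⟩).curry

variable (H : HomotopyRel (const Y y₀) (ContinuousMap.id Y) {y₀})

@[simp]
lemma track_zero (y : Y) : H.track y 0 = y₀ := H.apply_zero y

@[simp]
lemma track_one (y : Y) : H.track y 1 = y := H.apply_one y

@[simp]
lemma track_basepoint (t : I) : H.track y₀ t = y₀ := H.eq_fst t rfl

def trackComp {Z : Type*} [TopologicalSpace Z] {z : Z} (g : {g : C(Y, Z) // g y₀ = z}) (y : Y) :
    PS Z z :=
  ⟨g.1.comp (H.track y), by simp [g.2]⟩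

end ContinuousMap.HomotopyRel

def cubeContraction (ι : Type*) :
    HomotopyRel (const (ι → I) fun _ => 0) (ContinuousMap.id (ι → I)) {fun _ => 0} where
  toFun st i := st.1 * st.2 i
  continuous_toFun := continuous_pi fun i => (continuous_subtype_val.comp continuous_fst).mul
      (continuous_subtype_val.comp ((continuous_apply i).comp continuous_snd)) |>.subtype_mk _
  map_zero_left _ := funext fun _ => zero_mul _
  map_one_left _ := funext fun _ => one_mul _
  prop' t y hy := by
    rw [Set.mem_singleton_iff.mp hy]
    exact funext fun _ => mul_zero _

def basedComp {E X Y : Type*} [TopologicalSpace E] [TopologicalSpace X] [TopologicalSpace Y]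
    (p : C(E, X)) {y₀ : Y} {e : E} (f : {f : C(Y, E) // f y₀ = e}) :
    {g : C(Y, X) // g y₀ = p e} :=
  ⟨p.comp f.1, by simp [f.2]⟩

lemma continuous_basedComp {E X Y : Type*} [TopologicalSpace E] [TopologicalSpace X]
    [TopologicalSpace Y] (p : C(E, X)) (y₀ : Y) (e : E) :
    Continuous (basedComp p (y₀ := y₀) (e := e)) :=
  (p.continuous_postcomp.comp continuous_subtype_val).subtype_mk _

namespace ContPathCovering

variable {E X Y : Type*} [TopologicalSpace E] [TopologicalSpace X] [TopologicalSpace Y]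
  {p : C(E, X)} (hp : ContPathCovering p) {e : E}

noncomputable def liftHomeomorph (e : E) : PS E e ≃ₜ PS X (p e) := (hp e).homeomorph _

lemma comp_liftHomeomorph_symm (γ : PS X (p e)) :
    p.comp ((hp.liftHomeomorph e).symm γ).1 = γ.1 :=
  congrArg Subtype.val ((hp.liftHomeomorph e).apply_symm_apply γ)

lemma liftHomeomorph_symm_comp (α : PS E e) :
    (hp.liftHomeomorph e).symm (indMap p e α) = α :=
  (hp.liftHomeomorph e).symm_apply_apply α

variable {y₀ : Y} (H : HomotopyRel (const Y y₀) (ContinuousMap.id Y) {y₀})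

noncomputable def liftAlong (g : {g : C(Y, X) // g y₀ = p e}) (y : Y) : E :=
  ((hp.liftHomeomorph e).symm (H.trackComp g y)).1 1

lemma comp_liftAlong (g : {g : C(Y, X) // g y₀ = p e}) (y : Y) :
    p (hp.liftAlong H g y) = g.1 y := by
  have h : p (hp.liftAlong H g y) = g.1 (H.track y 1) :=
    congrArg (· 1) (hp.comp_liftHomeomorph_symm (H.trackComp g y))
  rwa [H.track_one] at h

lemma liftAlong_comp (f : {f : C(Y, E) // f y₀ = e}) (y : Y) :
    hp.liftAlong H (basedComp p f) y = f.1 y := by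
  have h : hp.liftAlong H (basedComp p f) y = f.1 (H.track y 1) :=
    congrArg (fun α : PS E e => α.1 1) (hp.liftHomeomorph_symm_comp (H.trackComp f y))
  rwa [H.track_one] at h

lemma liftAlong_basepoint (g : {g : C(Y, X) // g y₀ = p e}) : hp.liftAlong H g y₀ = e := by
  have hconst : H.trackComp g y₀ = indMap p e ⟨const I e, rfl⟩ := by
    ext t
    simp [HomotopyRel.trackComp, indMap, g.2]
  rw [liftAlong, hconst, hp.liftHomeomorph_symm_comp]
  rfl

lemma continuous_liftAlong_uncurry [LocallyCompactPair Y X] :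
    Continuous fun gy : {g : C(Y, X) // g y₀ = p e} × Y => hp.liftAlong H gy.1 gy.2 := by
  have hcomp : Continuous fun gy : {g : C(Y, X) // g y₀ = p e} × Y => H.trackComp gy.1 gy.2 :=
    ((continuous_subtype_val.comp continuous_fst).compCM
      (H.track.continuous.comp continuous_snd)).subtype_mk _
  exact (continuous_eval_const 1).comp <| continuous_subtype_val.comp <|
    (hp.liftHomeomorph e).symm.continuous.comp hcomp

noncomputable def basedLift [LocallyCompactPair Y X] (g : {g : C(Y, X) // g y₀ = p e}) :
    {f : C(Y, E) // f y₀ = e} :=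
  ⟨⟨hp.liftAlong H g, (hp.continuous_liftAlong_uncurry H).comp (Continuous.prodMk_right g)⟩,
    hp.liftAlong_basepoint H g⟩

lemma continuous_basedLift [LocallyCompactPair Y X] : Continuous (hp.basedLift H (e := e)) :=
  (continuous_of_continuous_uncurry _ (hp.continuous_liftAlong_uncurry H)).subtype_mk _

end ContPathCovering

theorem ContPathCovering.isHomeomorph_basedComp {E X Y : Type*} [TopologicalSpace E]
    [TopologicalSpace X] [TopologicalSpace Y] [LocallyCompactPair Y X] {p : C(E, X)}
    (hp : ContPathCovering p) {e : E} {y₀ : Y}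
    (H : HomotopyRel (const Y y₀) (ContinuousMap.id Y) {y₀}) :
    IsHomeomorph (basedComp p (y₀ := y₀) (e := e)) :=
  isHomeomorph_iff_exists_inverse.mpr ⟨continuous_basedComp p y₀ e, hp.basedLift H,
    fun f => Subtype.ext <| ContinuousMap.ext (hp.liftAlong_comp H f),
    fun g => Subtype.ext <| ContinuousMap.ext (hp.comp_liftAlong H g),
    hp.continuous_basedLift H⟩

/-- If `p` has the continuous path-covering property then the induced map on the
relative mapping spaces `(E,e)^(Iⁿ,0) → (X,p(e))^(Iⁿ,0)` (compact-open topology)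
is a homeomorphism for all `n ≥ 1`. -/
theorem stmt9 {E X : Type*} [TopologicalSpace E] [TopologicalSpace X] (p : C(E, X))
    (hp : ContPathCovering p) (e : E) (n : ℕ) :
    IsHomeomorph (fun f : {f : C((Fin n → I), E) // f (fun _ => 0) = e} =>
      (⟨p.comp f.1, by simp [f.2]⟩ :
        {g : C((Fin n → I), X) // g (fun _ => 0) = p e})) :=
  hp.isHomeomorph_basedComp (cubeContraction (Fin n))
end

section
/- If p : E → X has the continuous path-covering property, then the induced map on free path spaces P(p) : P(E) → P(X) (with compact-open topologies) also has the continuous path-covering property. -/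
open unitInterval Topology

/-! Given `α` and a path of paths `β` starting at `p ∘ α`, i.e. a square in `X` whose edge
`s = 0` is `p ∘ α`, lift the square pointwise: its value at `(s, t)` is the endpoint of the lift,
from `α 0`, of the radial path `u ↦ β (u s) (u t)`. All these lifts start at the single point
`α 0`, so the one homeomorphism `P(X, p (α 0)) ≃ₜ P(E, α 0)` makes the lifted square depend
continuously on `β`; uniqueness of lifts shows that its edge `s = 0` is `α` and that it agrees
with every lift of `β`. -/

lemma continuous_indMap {E X : Type*} [TopologicalSpace E] [TopologicalSpace X] (p : C(E, X))
    (e : E) : Continuous (indMap p e) :=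
  ((ContinuousMap.continuous_postcomp p).comp continuous_subtype_val).subtype_mk _

namespace ContinuousMap

variable {X : Type*} [TopologicalSpace X]

def radialPath (H : C(I, C(I, X))) (s t : I) : C(I, X) :=
  ⟨fun u => H (u * s) (u * t), by fun_prop⟩

@[simp]
lemma radialPath_apply (H : C(I, C(I, X))) (s t u : I) :
    H.radialPath s t u = H (u * s) (u * t) :=
  rfl

lemma continuous_radialPath :
    Continuous fun w : C(I, C(I, X)) × I × I => w.1.radialPath w.2.1 w.2.2 :=
  continuous_of_continuous_uncurry _ <|
    show Continuous fun w : (C(I, C(I, X)) × I × I) × I => w.1.1 (w.2 * w.1.2.1) (w.2 * w.1.2.2)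
    by fun_prop

end ContinuousMap

section RadialPath

variable {X : Type*} [TopologicalSpace X] {x : C(I, X)}

def basedRadialPath (β : PS C(I, X) x) (s t : I) : PS X (x 0) :=
  ⟨β.1.radialPath s t, by simp [β.2]⟩

lemma continuous_basedRadialPath :
    Continuous fun w : PS C(I, X) x × I × I => basedRadialPath w.1 w.2.1 w.2.2 :=
  (ContinuousMap.continuous_radialPath.comp (by fun_prop :
    Continuous fun w : PS C(I, X) x × I × I => (w.1.1, w.2))).subtype_mk _

end RadialPath

namespace ContPathCovering

variable {E X : Type*} [TopologicalSpace E] [TopologicalSpace X] {p : C(E, X)}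

noncomputable def liftPath (hp : ContPathCovering p) (e : E) : PS X (p e) ≃ₜ PS E e :=
  ((hp e).homeomorph _).symm

lemma indMap_liftPath (hp : ContPathCovering p) (e : E) (ω : PS X (p e)) :
    indMap p e (hp.liftPath e ω) = ω :=
  ((hp e).homeomorph _).apply_symm_apply ω

lemma liftPath_indMap (hp : ContPathCovering p) (e : E) (γ : PS E e) :
    hp.liftPath e (indMap p e γ) = γ :=
  ((hp e).homeomorph _).symm_apply_apply γ

variable (hp : ContPathCovering p) (α : C(I, E))

noncomputable def liftSquareAt (β : PS C(I, X) (p.comp α)) (s t : I) : E :=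
  (hp.liftPath (α 0) (basedRadialPath β s t)).1 1

lemma liftSquareAt_eq {β : PS C(I, X) (p.comp α)} {H : C(I, C(I, E))} {s t : I}
    (hH : H 0 0 = α 0) (hpH : p.comp (H.radialPath s t) = β.1.radialPath s t) :
    liftSquareAt hp α β s t = H s t := by
  have hlift : hp.liftPath (α 0) (basedRadialPath β s t) =
      ⟨H.radialPath s t, by simpa using hH⟩ := by
    rw [← hp.liftPath_indMap (α 0) ⟨H.radialPath s t, _⟩]
    exact congrArg _ (Subtype.ext hpH.symm)
  simp [liftSquareAt, hlift]

lemma apply_liftSquareAt (β : PS C(I, X) (p.comp α)) (s t : I) :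
    p (liftSquareAt hp α β s t) = β.1 s t := by
  have h := congrArg (fun ω : PS X (p (α 0)) => ω.1 1)
    (hp.indMap_liftPath (α 0) (basedRadialPath β s t))
  simpa [indMap, liftSquareAt, basedRadialPath] using h

lemma liftSquareAt_zero (β : PS C(I, X) (p.comp α)) (t : I) : liftSquareAt hp α β 0 t = α t :=
  liftSquareAt_eq hp α (H := .const I α) rfl <| by
    ext u
    simp [β.2]

lemma continuous_liftSquareAt :
    Continuous fun w : (PS C(I, X) (p.comp α) × I) × I => liftSquareAt hp α w.1.1 w.1.2 w.2 :=
  (continuous_eval_const 1).comp <| continuous_subtype_val.comp <|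
    (hp.liftPath (α 0)).continuous.comp <| continuous_basedRadialPath.comp
      (by fun_prop : Continuous fun w : (PS C(I, X) (p.comp α) × I) × I => (w.1.1, w.1.2, w.2))

noncomputable def liftSquare (β : PS C(I, X) (p.comp α)) : PS C(I, E) α :=
  ⟨.curry ⟨fun st : I × I => liftSquareAt hp α β st.1 st.2,
    (continuous_liftSquareAt hp α).comp
      (by fun_prop : Continuous fun st : I × I => ((β, st.1), st.2))⟩,
    by ext t; exact liftSquareAt_zero hp α β t⟩

lemma continuous_liftSquare : Continuous (liftSquare hp α) :=
  (ContinuousMap.continuous_of_continuous_uncurry _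
    (ContinuousMap.continuous_of_continuous_uncurry _ (continuous_liftSquareAt hp α))).subtype_mk _

end ContPathCovering

/-- If `p : E → X` has the continuous path-covering property, then so does the
induced map `P(p) : P(E) → P(X)` on free path spaces (compact-open topology). -/
theorem stmt11 {E X : Type*} [TopologicalSpace E] [TopologicalSpace X] (p : C(E, X))
    (hp : ContPathCovering p) :
    ContPathCovering (⟨fun α : C(I, E) => p.comp α, ContinuousMap.continuous_postcomp p⟩ :
      C(C(I, E), C(I, X))) := by
  intro α
  refine isHomeomorph_iff_exists_inverse.2 ⟨continuous_indMap _ α,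
    ContPathCovering.liftSquare hp α, fun γ => ?_, fun β => ?_,
    ContPathCovering.continuous_liftSquare hp α⟩
  · ext s t
    exact ContPathCovering.liftSquareAt_eq hp α (s := s) (t := t)
      (congrFun (congrArg DFunLike.coe γ.2) 0) rfl
  · ext s t
    exact ContPathCovering.apply_liftSquareAt hp α β s t
end

section
/- If p : E → X has the path-covering property, the homotopy lifting property with respect to I, and p_# : π₁(E,e) → π₁(X,p(e)) is surjective for some e ∈ E, then p is a continuous bijection. -/
/-!
Surjectivity of `p` is path lifting from `e`. For injectivity, let `p a = p b` and choose paths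
`η` from `e` to `a` and `δ` from `a` to `b`. By `π₁`-surjectivity the loop `pη ⬝ pδ ⬝ pη⁻¹` is
homotopic to the image of a loop `γ` at `e`, so `γ ⬝ η` and `η ⬝ δ` are paths from `e` to `a` and
`b` with homotopic images. Lifting that homotopy, its sides lift constant paths and are therefore
constant by uniqueness of lifts, so both lifts end at the same point and `a = b`.
-/

open unitInterval Topology

section

variable {E X : Type*} [TopologicalSpace E] [TopologicalSpace X] {p : C(E, X)}

namespace UniquePathLifting

theorem eq_of_comp_eq_s14 (hp : UniquePathLifting p) {α β : C(I, E)} (h₀ : α 0 = β 0)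
    (h : ∀ s, p (α s) = p (β s)) (s : I) : α s = β s := by
  have := hp (α 0) (a₁ := ⟨α, rfl⟩) (a₂ := ⟨β, h₀.symm⟩)
    (Subtype.ext <| ContinuousMap.ext h)
  exact DFunLike.congr_fun (congrArg Subtype.val this) s

theorem eq_of_comp_eq_const (hp : UniquePathLifting p) {α : C(I, E)} {x : X}
    (h : ∀ s, p (α s) = x) (s : I) : α s = α 0 := by
  simpa using hp.eq_of_comp_eq_s14 (α := α) (β := .const I (α 0)) rfl (fun s => by simp [h]) s

theorem eq_of_homotopic_map (hp : UniquePathLifting p) (hlp : HLP p I) {a c d : E}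
    (γ : Path a c) (δ : Path a d) (hcd : p c = p d)
    (h : (γ.map p.continuous).Homotopic ((δ.map p.continuous).cast rfl hcd)) : c = d := by
  obtain ⟨F⟩ := h
  obtain ⟨G, hGp, hG₀⟩ := hlp γ (F.toContinuousMap.comp .prodSwap) (fun s => by simp)
  have hleft (t : I) : G (0, t) = a := by
    simpa [hG₀] using
      hp.eq_of_comp_eq_const (α := G.curry 0) (x := p a) (fun t => by simp [hGp]) t
  have hright (t : I) : G (1, t) = c := by
    simpa [hG₀] using
      hp.eq_of_comp_eq_const (α := G.curry 1) (x := p c) (fun t => by simp [hGp]) t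
  have htop : G (1, 1) = δ 1 :=
    hp.eq_of_comp_eq_s14 (α := ⟨fun s => G (s, 1), by fun_prop⟩) (β := δ)
      (by simpa using hleft 1) (fun s => by simp [hGp]) 1
  simpa [hright] using htop

end UniquePathLifting

theorem PathCovering.surjective [PathConnectedSpace X] (hp : PathCovering p) (e : E) :
    Function.Surjective p := by
  intro x
  obtain ⟨β⟩ := PathConnectedSpace.joined (p e) x
  obtain ⟨⟨α, _⟩, hα⟩ := (hp e).2 ⟨β.toContinuousMap, β.source⟩
  refine ⟨α 1, ?_⟩
  simpa [indMap] using DFunLike.congr_fun (congrArg Subtype.val hα) 1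

open Path.Homotopic.Quotient in
theorem UniquePathLifting.injective [PathConnectedSpace E] (hp : UniquePathLifting p)
    (hlp : HLP p I) (e : E)
    (hsurj : ∀ α : Path (p e) (p e), ∃ γ : Path e e, (γ.map p.continuous).Homotopic α) :
    Function.Injective p := by
  intro a b hab
  obtain ⟨η⟩ := PathConnectedSpace.joined e a
  obtain ⟨δ⟩ := PathConnectedSpace.joined a b
  obtain ⟨γ, hγ⟩ := hsurj (((η.map p.continuous).trans
    ((δ.map p.continuous).cast rfl hab)).trans (η.map p.continuous).symm)
  refine hp.eq_of_homotopic_map hlp (γ.trans η) (η.trans δ) hab ?_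
  rw [← Path.Homotopic.Quotient.eq] at hγ ⊢
  have hcast : ((η.trans δ).map p.continuous).cast rfl hab =
      (η.map p.continuous).trans ((δ.map p.continuous).cast rfl hab) := by
    ext; simp [Path.trans_apply]
  rw [hcast, Path.map_trans, mk_trans, hγ]
  simp only [mk_trans, mk_symm, trans_assoc, symm_trans, trans_refl]

end

/-- If `p` has the path-covering property, the homotopy lifting property with
respect to `I`, and is `π₁`-surjective at some point, then `p` is a continuous
bijection. -/
theorem stmt14 {E X : Type*} [TopologicalSpace E] [TopologicalSpace X]
    [PathConnectedSpace E] [PathConnectedSpace X] (p : C(E, X))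
    (hp : PathCovering p) (hlp : HLP p I) (e : E)
    (hsurj : ∀ α : Path (p e) (p e), ∃ γ : Path e e,
      (γ.map p.continuous).Homotopic α) :
    Function.Bijective p :=
  ⟨UniquePathLifting.injective (fun e => (hp e).1) hlp e hsurj, hp.surjective e⟩
end

section
/- If p : E → X has the continuous path-covering property and {e} is closed in E, then the induced map Ωⁿ(p) : Ωⁿ(E,e) → Ωⁿ(X,p(e)) on n-fold loop spaces with the compact-open topology is a closed topological embedding for n = 1 and a homeomorphism for n ≥ 2. -/
open unitInterval Topology

/-- The `n`-fold loop space `Ωⁿ(Y,y)`: maps `(Iⁿ, ∂Iⁿ) → (Y, y)` with the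
compact-open topology. -/
abbrev LoopSp (n : ℕ) (Y : Type*) [TopologicalSpace Y] (y : Y) : Type _ :=
  {f : C((Fin n → I), Y) // ∀ t : Fin n → I, (∃ i, t i = 0 ∨ t i = 1) → f t = y}

/-! Currying along the first coordinate turns a loop `g ∈ Ωᵐ⁺¹(X, p e)` into a continuous family,
indexed by `Iᵐ`, of paths starting at `p e`. Lifting every path through the inverse of the
path-space homeomorphism `P(E, e) ≃ₜ P(X, p e)` yields a continuous map `Ωᵐ⁺¹(X) → C(Iᵐ⁺¹, E)`
that is left inverse to `Ωᵐ⁺¹(p)`; hence `Ωᵐ⁺¹(p)` is an embedding whose image consists of the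
loops whose lift sends `∂Iᵐ⁺¹` to `e`, a closed condition because `{e}` is closed.

Since a path lying over a constant path is constant, the lift is `e` on the face `t₀ = 0` and on
the faces over `∂Iᵐ`. When `m ≥ 1`, the face `t₀ = 1` is path-connected, maps into the fibre over
`p e`, and meets `∂Iᵐ`; so the lift is `e` there as well and `Ωᵐ⁺¹(p)` is onto. -/

instance unitInterval.pathConnectedSpace : PathConnectedSpace I :=
  isPathConnected_iff_pathConnectedSpace.1 <|
    (convex_Icc (0 : ℝ) 1).isPathConnected (Set.nonempty_Icc.2 zero_le_one)

section Cube

variable (α : Type*) [TopologicalSpace α] (m : ℕ)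

def finConsHomeomorph : (Fin (m + 1) → α) ≃ₜ (Fin m → α) × α where
  toFun t := (Fin.tail t, t 0)
  invFun z := Fin.cons z.2 z.1
  left_inv := Fin.cons_self_tail
  right_inv z := by simp
  continuous_toFun := by fun_prop
  continuous_invFun := continuous_pi fun i => by
    refine Fin.cases ?_ (fun j => ?_) i
    · simp only [Fin.cons_zero]; fun_prop
    · simp only [Fin.cons_succ]; fun_prop

variable [LocallyCompactSpace α] (Y : Type*) [TopologicalSpace Y]

def consCurry : C((Fin (m + 1) → α), Y) ≃ₜ C((Fin m → α), C(α, Y)) :=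
  (Homeomorph.arrowCongr (finConsHomeomorph α m) (Homeomorph.refl Y)).trans Homeomorph.curry

variable {α m Y}

@[simp] lemma consCurry_apply (f : C((Fin (m + 1) → α), Y)) (z : Fin m → α) (t : α) :
    consCurry α m Y f z t = f (Fin.cons t z) := rfl

end Cube

section Loops

variable {Y : Type*} [TopologicalSpace Y] {y : Y} {m : ℕ}

def loopSlice (g : LoopSp (m + 1) Y y) (z : Fin m → I) : PS Y y :=
  ⟨consCurry I m Y g.1 z, g.2 _ ⟨0, Or.inl rfl⟩⟩

lemma continuous_loopSlice :
    Continuous fun q : LoopSp (m + 1) Y y × (Fin m → I) => loopSlice q.1 q.2 :=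
  (continuous_eval.comp (((consCurry I m Y).continuous.comp
    (continuous_subtype_val.comp continuous_fst)).prodMk continuous_snd)).subtype_mk _

variable {E X : Type*} [TopologicalSpace E] [TopologicalSpace X]

def loopMap (p : C(E, X)) (e : E) (n : ℕ) : LoopSp n E e → LoopSp n X (p e) :=
  fun f => ⟨p.comp f.1, fun t ht => by simp [f.2 t ht]⟩

lemma continuous_loopMap (p : C(E, X)) (e : E) (n : ℕ) : Continuous (loopMap p e n) :=
  ((ContinuousMap.continuous_postcomp p).comp continuous_subtype_val).subtype_mk _

end Loops

namespace ContPathCovering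

variable {E X : Type*} [TopologicalSpace E] [TopologicalSpace X] {p : C(E, X)}
  (hp : ContPathCovering p)

include hp in
lemma apply_eq_of_comp_const {Z : Type*} [TopologicalSpace Z] [PathConnectedSpace Z]
    (φ : C(Z, E)) {x : X} (hφ : ∀ z, p (φ z) = x) (z z' : Z) : φ z' = φ z := by
  let γ : C(I, E) := φ.comp (PathConnectedSpace.somePath z z')
  have hγ : (⟨γ, rfl⟩ : PS E (γ 0)) = ⟨ContinuousMap.const I (γ 0), rfl⟩ :=
    (hp (γ 0)).injective <| Subtype.ext <| ContinuousMap.ext fun t => by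
      simp [indMap, γ, hφ]
  simpa [γ] using congrArg (fun β : PS E (γ 0) => β.1 1) hγ

noncomputable def pathLift (e : E) : PS X (p e) ≃ₜ PS E e :=
  ((hp e).homeomorph (indMap p e)).symm

lemma indMap_pathLift (e : E) (γ : PS X (p e)) : indMap p e (hp.pathLift e γ) = γ :=
  ((hp e).homeomorph _).apply_symm_apply γ

lemma pathLift_indMap (e : E) (α : PS E e) : hp.pathLift e (indMap p e α) = α :=
  ((hp e).homeomorph _).symm_apply_apply α

variable (e : E) {m : ℕ}

noncomputable def liftLoop (g : LoopSp (m + 1) X (p e)) : C((Fin (m + 1) → I), E) :=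
  (consCurry I m E).symm ⟨fun z => (hp.pathLift e (loopSlice g z)).1,
    continuous_subtype_val.comp <| (hp.pathLift e).continuous.comp <|
      continuous_loopSlice.comp (continuous_const.prodMk continuous_id)⟩

lemma liftLoop_apply (g : LoopSp (m + 1) X (p e)) (w : Fin (m + 1) → I) :
    hp.liftLoop e g w = (hp.pathLift e (loopSlice g (Fin.tail w))).1 (w 0) := rfl

lemma continuous_liftLoop : Continuous (hp.liftLoop e (m := m)) :=
  (consCurry I m E).symm.continuous.comp <| ContinuousMap.continuous_of_continuous_uncurry _ <|
    continuous_subtype_val.comp ((hp.pathLift e).continuous.comp continuous_loopSlice)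

lemma apply_liftLoop (g : LoopSp (m + 1) X (p e)) (w : Fin (m + 1) → I) :
    p (hp.liftLoop e g w) = g.1 w := by
  have := congrArg (fun β : PS X (p e) => β.1 (w 0))
    (hp.indMap_pathLift e (loopSlice g (Fin.tail w)))
  simpa [liftLoop_apply, indMap, loopSlice] using this

lemma liftLoop_loopMap (f : LoopSp (m + 1) E e) : hp.liftLoop e (loopMap p e _ f) = f.1 := by
  ext w
  have : loopSlice (loopMap p e _ f) (Fin.tail w) = indMap p e (loopSlice f (Fin.tail w)) := rfl
  rw [liftLoop_apply, this, pathLift_indMap]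
  simp [loopSlice]

lemma liftLoop_of_head_eq_zero (g : LoopSp (m + 1) X (p e)) {w : Fin (m + 1) → I}
    (hw : w 0 = 0) : hp.liftLoop e g w = e := by
  rw [liftLoop_apply, hw]
  exact (hp.pathLift e _).2

lemma liftLoop_of_tail_mem_boundary (g : LoopSp (m + 1) X (p e)) {w : Fin (m + 1) → I}
    (hw : ∃ i, Fin.tail w i = 0 ∨ Fin.tail w i = 1) : hp.liftLoop e g w = e := by
  let φ : C(I, E) := (hp.liftLoop e g).comp ⟨fun t => Fin.cons t (Fin.tail w), by fun_prop⟩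
  have hφ (t : I) : p (φ t) = p e := by
    obtain ⟨i, hi⟩ := hw
    simp only [φ, ContinuousMap.comp_apply, ContinuousMap.coe_mk, apply_liftLoop]
    exact g.2 _ ⟨i.succ, by simpa using hi⟩
  calc hp.liftLoop e g w = φ (w 0) := by simp [φ]
    _ = φ 0 := hp.apply_eq_of_comp_const φ hφ 0 (w 0)
    _ = e := hp.liftLoop_of_head_eq_zero e g (by simp)

lemma liftLoop_of_head_eq_one (hm : m ≠ 0) (g : LoopSp (m + 1) X (p e))
    {w : Fin (m + 1) → I} (hw : w 0 = 1) : hp.liftLoop e g w = e := by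
  let φ : C((Fin m → I), E) :=
    (hp.liftLoop e g).comp ⟨fun z => (Fin.cons 1 z : Fin (m + 1) → I), by fun_prop⟩
  have hφ (z : Fin m → I) : p (φ z) = p e := by
    simp only [φ, ContinuousMap.comp_apply, ContinuousMap.coe_mk, apply_liftLoop]
    exact g.2 _ ⟨0, by simp⟩
  calc hp.liftLoop e g w = φ (Fin.tail w) := by simp [φ, ← hw]
    _ = φ 0 := hp.apply_eq_of_comp_const φ hφ _ _
    _ = e := hp.liftLoop_of_tail_mem_boundary e g ⟨⟨0, Nat.pos_of_ne_zero hm⟩, by simp⟩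

lemma liftLoop_of_mem_boundary (hm : m ≠ 0) (g : LoopSp (m + 1) X (p e))
    {w : Fin (m + 1) → I} (hw : ∃ i, w i = 0 ∨ w i = 1) : hp.liftLoop e g w = e := by
  obtain ⟨i, hi⟩ := hw
  induction i using Fin.cases with
  | zero => exact hi.elim (hp.liftLoop_of_head_eq_zero e g) (hp.liftLoop_of_head_eq_one e hm g)
  | succ j => exact hp.liftLoop_of_tail_mem_boundary e g ⟨j, hi⟩

lemma loopMap_liftLoop (g : LoopSp (m + 1) X (p e))
    (hg : ∀ w : Fin (m + 1) → I, (∃ i, w i = 0 ∨ w i = 1) → hp.liftLoop e g w = e) :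
    loopMap p e _ ⟨hp.liftLoop e g, hg⟩ = g :=
  Subtype.ext (ContinuousMap.ext (hp.apply_liftLoop e g))

include hp in
lemma isEmbedding_loopMap : IsEmbedding (loopMap p e (m + 1)) := by
  have : hp.liftLoop e ∘ loopMap p e (m + 1) = Subtype.val := funext (hp.liftLoop_loopMap e)
  exact .of_comp (continuous_loopMap p e _) (hp.continuous_liftLoop e)
    (this ▸ IsEmbedding.subtypeVal)

lemma range_loopMap : Set.range (loopMap p e (m + 1)) =
    {g | ∀ w : Fin (m + 1) → I, (∃ i, w i = 0 ∨ w i = 1) → hp.liftLoop e g w = e} := by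
  ext g
  constructor
  · rintro ⟨f, rfl⟩ w hw
    rw [liftLoop_loopMap]
    exact f.2 w hw
  · exact fun hg => ⟨_, hp.loopMap_liftLoop e g hg⟩

include hp in
lemma isClosedEmbedding_loopMap (he : IsClosed ({e} : Set E)) :
    IsClosedEmbedding (loopMap p e (m + 1)) := by
  refine ⟨hp.isEmbedding_loopMap e, ?_⟩
  rw [hp.range_loopMap e]
  simp only [Set.ofPred_forall]
  exact isClosed_iInter fun w => isClosed_iInter fun _ =>
    he.preimage ((continuous_eval_const w).comp (hp.continuous_liftLoop e))

include hp in
lemma isHomeomorph_loopMap (hm : m ≠ 0) : IsHomeomorph (loopMap p e (m + 1)) :=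
  isHomeomorph_iff_isEmbedding_surjective.2 ⟨hp.isEmbedding_loopMap e,
    fun g => ⟨_, hp.loopMap_liftLoop e g fun _ => hp.liftLoop_of_mem_boundary e hm g⟩⟩

end ContPathCovering

/-- If `p` has the continuous path-covering property and `{e}` is closed, then the
induced map `Ωⁿ(E,e) → Ωⁿ(X,p e)` is a closed embedding for `n = 1` and a
homeomorphism for `n ≥ 2`. -/
theorem stmt15 {E X : Type*} [TopologicalSpace E] [TopologicalSpace X] (p : C(E, X))
    (hp : ContPathCovering p) (e : E) (he : IsClosed ({e} : Set E)) (n : ℕ) :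
    (n = 1 → IsClosedEmbedding (fun f : LoopSp n E e =>
      (⟨p.comp f.1, fun t ht => by simp [f.2 t ht]⟩ : LoopSp n X (p e)))) ∧
    (2 ≤ n → IsHomeomorph (fun f : LoopSp n E e =>
      (⟨p.comp f.1, fun t ht => by simp [f.2 t ht]⟩ : LoopSp n X (p e)))) := by
  refine ⟨?_, fun hn => ?_⟩
  · rintro rfl
    exact hp.isClosedEmbedding_loopMap e he (m := 0)
  · obtain ⟨m, rfl⟩ : ∃ m, n = m + 1 + 1 := ⟨n - 2, by omega⟩
    exact hp.isHomeomorph_loopMap e m.succ_ne_zero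
end
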